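/- For all integers k ≥ 2 and n ≥ 1, the assignment sending an equipped fission graph (Γ, d) of rank n to the supernova graph Γ̂(l) with leg lengths l_i = d_i − 1 induces a bijection between isomorphism classes of equipped fission graphs of rank n whose maximal edge multiplicity is exactly k and isomorphism classes of supernova graphs with n vertices whose maximal edge multiplicity is exactly k. Consequently σ(k,n) = ψ(k+1,n) = φ(k+2,n). -/

import Mathlib

/-- A fission chain of slope `≤ k` with `n` leaves: a chain of surjective maps of
finite sets `J₁ ↠ J₂ ↠ ⋯ ↠ J_{k+1}` with `|J₁| = n` and `|J_{k+1}| = 1`.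
We encode `J_{i+1} := Fin (size i)`; the chain is prolonged trivially above
height `k+1` (all later sets necessarily also have one element, since all the
maps are surjective). -/
structure FChain (k n : ℕ) where
  size : ℕ → ℕ
  map : ∀ i, Fin (size i) → Fin (size (i+1))
  surj : ∀ i, Function.Surjective (map i)
  size_zero : size 0 = n
  size_top : size k = 1

/-- A fission chain of slope `≤ k` has slope exactly `k` if `k = 0` or `|J_k| ≥ 2`
(here `J_k = Fin (size (k-1))`). -/
def FChain.ExactSlope {k n : ℕ} (c : FChain k n) : Prop :=
  k = 0 ∨ 2 ≤ c.size (k - 1)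

/-- Isomorphism of fission chains: bijections between the corresponding sets
commuting with all the maps. -/
def FChain.Iso {k n m : ℕ} (c : FChain k n) (d : FChain k m) : Prop :=
  ∃ e : ∀ i, Fin (c.size i) ≃ Fin (d.size i),
    ∀ i x, e (i+1) (c.map i x) = d.map i (e i x)

/-- `Φ(k,n)`: the number of isomorphism classes of fission chains of slope `≤ k`
with `n` leaves. -/
noncomputable def PhiBig (k n : ℕ) : ℕ :=
  Nat.card (Quot (fun c d : FChain k n => c.Iso d))

/-- `φ(k,n)`: the number of isomorphism classes of fission chains of slope
exactly `k` with `n` leaves. -/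
noncomputable def phi (k n : ℕ) : ℕ :=
  Nat.card (Quot (fun c d : {c : FChain k n // c.ExactSlope} => c.1.Iso d.1))

/-- An untwisted fission tree of slope `k` and rank `n`: a fission chain of slope
exactly `k` together with a multiplicity map `μ : J₁ → ℤ_{≥1}` with `Σ μ = n`. -/
structure FTree (k n : ℕ) where
  leaves : ℕ
  chain : FChain k leaves
  exact : chain.ExactSlope
  mult : Fin (chain.size 0) → ℕ
  mult_pos : ∀ i, 1 ≤ mult i
  mult_sum : ∑ i, mult i = n

/-- Isomorphism of untwisted fission trees: an isomorphism of the underlying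
chains intertwining the multiplicity maps. -/
def FTree.Iso {k n : ℕ} (T U : FTree k n) : Prop :=
  ∃ e : ∀ i, Fin (T.chain.size i) ≃ Fin (U.chain.size i),
    (∀ i x, e (i+1) (T.chain.map i x) = U.chain.map i (e i x)) ∧
    (∀ x, U.mult (e 0 x) = T.mult x)

/-- `ψ(k,n)`: the number of isomorphism classes of untwisted fission trees of
slope `k` and rank `n`. -/
noncomputable def psi (k n : ℕ) : ℕ :=
  Nat.card (Quot (fun T U : FTree k n => T.Iso U))

/-- A multigraph: a finite vertex set together with a symmetric edge-multiplicity
function vanishing on the diagonal. -/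
structure MG where
  V : Type
  [fin : Fintype V]
  e : V → V → ℕ
  symm : ∀ i j, e i j = e j i
  loopless : ∀ i, e i i = 0

attribute [instance] MG.fin

/-- Isomorphism of multigraphs. -/
def MG.Iso (G H : MG) : Prop :=
  ∃ σ : G.V ≃ H.V, ∀ i j, H.e (σ i) (σ j) = G.e i j

/-- The maximal edge multiplicity of `G` is exactly `k`. -/
def MG.MaxMultExact (G : MG) (k : ℕ) : Prop :=
  (∃ i j, G.e i j = k) ∧ ∀ i j, G.e i j ≤ k

/-- The image of a leaf at height `h+1` (the composite of the first `h` maps). -/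
def FChain.img {k n : ℕ} (c : FChain k n) : ∀ h, Fin (c.size 0) → Fin (c.size h)
  | 0 => id
  | h+1 => c.map h ∘ c.img h

theorem FChain.meet_ex {k n : ℕ} (c : FChain k n) (i j : Fin (c.size 0)) :
    ∃ h, c.img h i = c.img h j := by
  refine ⟨k, ?_⟩
  have h1 := c.size_top
  have hx : ∀ x : Fin (c.size k), x = ⟨0, by omega⟩ := fun x => by
    have := x.isLt; exact Fin.ext (by omega)
  rw [hx (c.img k i), hx (c.img k j)]

/-- `c.meet i j + 1` is the height of the nearest common ancestor of the leaves
`i` and `j`: `c.meet i j` is the least index `h` such that `i` and `j` have the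
same image in `J_{h+1} = Fin (c.size h)`. -/
def FChain.meet {k n : ℕ} (c : FChain k n) (i j : Fin (c.size 0)) : ℕ :=
  Nat.find (c.meet_ex i j)

theorem FChain.meet_comm {k n : ℕ} (c : FChain k n) (i j : Fin (c.size 0)) :
    c.meet i j = c.meet j i := by
  unfold FChain.meet
  exact le_antisymm (Nat.find_le (Nat.find_spec (c.meet_ex j i)).symm)
    (Nat.find_le (Nat.find_spec (c.meet_ex i j)).symm)

/-- The fission graph of a fission chain: vertices are the leaves, and the number
of edges between distinct leaves `i, j` is `h_{ij} - 2` where `h_{ij}` is the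
height of their nearest common ancestor (here `h_{ij} = c.meet i j + 1`). -/
def FChain.graph {k n : ℕ} (c : FChain k n) : MG where
  V := Fin (c.size 0)
  e i j := if i = j then 0 else c.meet i j - 1
  symm i j := by
    by_cases h : i = j
    · subst h; rfl
    · show (if i = j then 0 else c.meet i j - 1) = (if j = i then 0 else c.meet j i - 1)
      rw [if_neg h, if_neg (Ne.symm h), c.meet_comm]
  loopless i := by simp

/-- A multigraph is a fission graph if it is isomorphic to the fission graph of
some fission chain of slope exactly `k ≥ 2`. -/
def IsFissionGraph (G : MG) : Prop :=
  ∃ (k m : ℕ) (c : FChain k m), 2 ≤ k ∧ c.ExactSlope ∧ G.Iso c.graph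

/-- The edge multiplicities of a supernova graph: the core edges of `G`, plus
single edges forming, for each vertex `i` of `G`, a simple path on `l i` new
vertices attached to `i`. -/
noncomputable def snovaE (G : MG) (l : G.V → ℕ) :
    (G.V ⊕ Σ i : G.V, Fin (l i)) → (G.V ⊕ Σ i : G.V, Fin (l i)) → ℕ := by
  haveI : DecidableEq G.V := Classical.decEq G.V
  exact fun x y => match x, y with
    | .inl i, .inl j => G.e i j
    | .inl i, .inr ⟨j, t⟩ => if i = j ∧ t.val = 0 then 1 else 0
    | .inr ⟨j, t⟩, .inl i => if i = j ∧ t.val = 0 then 1 else 0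
    | .inr ⟨i, s⟩, .inr ⟨j, t⟩ =>
        if i = j ∧ (s.val + 1 = t.val ∨ t.val + 1 = s.val) then 1 else 0

/-- The supernova graph obtained from a multigraph `G` by attaching to each
vertex `i` a leg consisting of `l i` new vertices forming a simple path joined
to `i` by single edges. -/
noncomputable def MG.snova (G : MG) (l : G.V → ℕ) : MG where
  V := G.V ⊕ Σ i : G.V, Fin (l i)
  e := snovaE G l
  symm := by
    letI : DecidableEq G.V := Classical.decEq G.V
    unfold snovaE
    rintro (i | ⟨i, s⟩) (j | ⟨j, t⟩)
    · exact G.symm i j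
    · rfl
    · rfl
    · show (if i = j ∧ (s.val + 1 = t.val ∨ t.val + 1 = s.val) then 1 else 0) =
          (if j = i ∧ (t.val + 1 = s.val ∨ s.val + 1 = t.val) then 1 else 0)
      split_ifs with h1 h2 <;>
        first
          | rfl
          | exact absurd ⟨h1.1.symm, h1.2.symm⟩ h2
          | rename_i h2; exact absurd ⟨h2.1.symm, h2.2.symm⟩ h1
  loopless := by
    letI : DecidableEq G.V := Classical.decEq G.V
    unfold snovaE
    rintro (i | ⟨i, s⟩)
    · exact G.loopless i
    · simp

/-- A multigraph is a supernova graph if it is isomorphic to a graph obtained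
from a fission graph by attaching legs. -/
def IsSupernova (G : MG) : Prop :=
  ∃ (H : MG) (l : H.V → ℕ), IsFissionGraph H ∧ G.Iso (H.snova l)

/-- An equipped fission graph of rank `n`: a fission graph whose maximal edge
multiplicity is exactly `k`, equipped with a dimension vector `d` (an integer
`d i ≥ 1` at each vertex) of total sum `n`. -/
structure EFG (k n : ℕ) where
  G : MG
  fission : IsFissionGraph G
  maxm : G.MaxMultExact k
  d : G.V → ℕ
  d_pos : ∀ i, 1 ≤ d i
  rank : ∑ i, d i = n

/-- Isomorphism of equipped fission graphs: a multigraph isomorphism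
intertwining the dimension vectors. -/
def EFG.Iso {k n : ℕ} (a b : EFG k n) : Prop :=
  ∃ σ : a.G.V ≃ b.G.V, (∀ i j, b.G.e (σ i) (σ j) = a.G.e i j) ∧ ∀ i, b.d (σ i) = a.d i

/-- The supernova graph of an equipped fission graph: attach a leg of length
`d i − 1` to each vertex `i`. -/
noncomputable def EFG.snovaOf {k n : ℕ} (a : EFG k n) : MG :=
  a.G.snova (fun i => a.d i - 1)

/-- The supernova graphs with `n` vertices and maximal edge multiplicity
exactly `k`. -/
def SN (k n : ℕ) : Type 1 :=
  {G : MG // IsSupernova G ∧ G.MaxMultExact k ∧ Fintype.card G.V = n}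

/-- `σ(k,n)`: the number of isomorphism classes of supernova graphs with `n`
vertices whose maximal edge multiplicity is exactly `k`. -/
noncomputable def sigmaSN (k n : ℕ) : ℕ :=
  Nat.card (Quot (fun a b : SN k n => a.1.Iso b.1))

section ChainLemmas

variable {k n m : ℕ}

theorem FChain.img_stable (c : FChain k n) {h h' : ℕ} (hh : h ≤ h')
    {i j : Fin (c.size 0)} (hij : c.img h i = c.img h j) : c.img h' i = c.img h' j := by
  induction h' with
  | zero => obtain rfl := Nat.le_zero.mp hh; exact hij
  | succ h' ih =>
    rcases Nat.lt_or_ge h (h'+1) with hlt | hge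
    · have := ih (by omega)
      show c.map h' (c.img h' i) = c.map h' (c.img h' j)
      rw [this]
    · have : h = h' + 1 := le_antisymm hh hge
      exact this ▸ hij

theorem FChain.meet_le_iff (c : FChain k n) {h : ℕ} {i j : Fin (c.size 0)} :
    c.meet i j ≤ h ↔ c.img h i = c.img h j := by
  constructor
  · intro hle
    exact c.img_stable hle (Nat.find_spec (c.meet_ex i j))
  · intro him
    exact Nat.find_le him

theorem FChain.meet_eq_zero_iff (c : FChain k n) {i j : Fin (c.size 0)} :
    c.meet i j = 0 ↔ i = j := by
  rw [← Nat.le_zero, c.meet_le_iff]; rfl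

theorem FChain.meet_le_top (c : FChain k n) (i j : Fin (c.size 0)) : c.meet i j ≤ k := by
  rw [c.meet_le_iff]
  have h1 := c.size_top
  have hx : ∀ x : Fin (c.size k), x = ⟨0, by omega⟩ := fun x => by
    have := x.isLt; exact Fin.ext (by omega)
  rw [hx (c.img k i), hx (c.img k j)]

theorem FChain.meet_ultra (c : FChain k n) (i j l : Fin (c.size 0)) :
    c.meet i l ≤ max (c.meet i j) (c.meet j l) := by
  rw [c.meet_le_iff]
  have h1 : c.img (max (c.meet i j) (c.meet j l)) i = c.img _ j :=
    c.meet_le_iff.mp (le_max_left _ _)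
  have h2 : c.img (max (c.meet i j) (c.meet j l)) j = c.img _ l :=
    c.meet_le_iff.mp (le_max_right _ _)
  exact h1.trans h2

theorem FChain.img_surj (c : FChain k n) (h : ℕ) : Function.Surjective (c.img h) := by
  induction h with
  | zero => exact fun x => ⟨x, rfl⟩
  | succ h ih => exact (c.surj h).comp ih

theorem FChain.graph_e (c : FChain k n) (i j : Fin (c.size 0)) :
    c.graph.e i j = if i = j then 0 else c.meet i j - 1 := rfl

theorem FChain.meet_pos (c : FChain k n) {i j : Fin (c.size 0)} (hij : i ≠ j) :
    1 ≤ c.meet i j := by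
  rcases Nat.eq_zero_or_pos (c.meet i j) with h | h
  · exact absurd (c.meet_eq_zero_iff.mp h) hij
  · exact h

/-- meet determined by the graph. -/
theorem FChain.meet_eq_graph (c : FChain k n) {i j : Fin (c.size 0)} (hij : i ≠ j) :
    c.meet i j = c.graph.e i j + 1 := by
  rw [c.graph_e, if_neg hij]
  have := c.meet_pos hij
  omega

/-- Slope exactly `K ≥ 2` gives max edge multiplicity exactly `K - 1`. -/
theorem FChain.graph_maxMult (c : FChain k n) (hk : 2 ≤ k) (he : c.ExactSlope) :
    c.graph.MaxMultExact (k - 1) := by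
  constructor
  · -- existence
    have h2 : 2 ≤ c.size (k-1) := he.resolve_left (by omega)
    have hs := c.img_surj (k-1)
    obtain ⟨i, hi⟩ := hs ⟨0, by omega⟩
    obtain ⟨j, hj⟩ := hs ⟨1, by omega⟩
    have hne : c.img (k-1) i ≠ c.img (k-1) j := by
      rw [hi, hj]; intro hc; have := congrArg Fin.val hc; simp at this
    have hij : i ≠ j := fun hc => hne (hc ▸ rfl)
    refine ⟨i, j, ?_⟩
    rw [c.graph_e, if_neg hij]
    have h1 : ¬ (c.meet i j ≤ k - 1) := fun hc => hne (c.meet_le_iff.mp hc)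
    have h3 := c.meet_le_top i j
    omega
  · intro i j
    rw [c.graph_e i j]
    split
    · omega
    · have := c.meet_le_top i j; omega

/-- A meet-preserving bijection of leaves induces an isomorphism of chains. -/
theorem FChain.iso_of_meet_equiv (c : FChain k n) (d : FChain k m)
    (σ : Fin (c.size 0) ≃ Fin (d.size 0))
    (hm : ∀ i j, d.meet (σ i) (σ j) = c.meet i j) :
    ∃ e : ∀ i, Fin (c.size i) ≃ Fin (d.size i),
      (∀ i x, e (i+1) (c.map i x) = d.map i (e i x)) ∧ ∀ x, e 0 x = σ x := by
  classical
  have key : ∀ h : ℕ, ∃ e : Fin (c.size h) ≃ Fin (d.size h),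
      ∀ x : Fin (c.size 0), e (c.img h x) = d.img h (σ x) := by
    intro h
    set f : Fin (c.size h) → Fin (d.size h) :=
      fun z => d.img h (σ (Function.surjInv (c.img_surj h) z)) with hf
    have hfx : ∀ x : Fin (c.size 0), f (c.img h x) = d.img h (σ x) := by
      intro x
      have h1 : c.img h (Function.surjInv (c.img_surj h) (c.img h x)) = c.img h x :=
        Function.surjInv_eq (c.img_surj h) _
    -- meet ≤ h both
      have h2 : c.meet (Function.surjInv (c.img_surj h) (c.img h x)) x ≤ h :=
        c.meet_le_iff.mpr (by rw [h1])
      have h3 : d.meet (σ (Function.surjInv (c.img_surj h) (c.img h x))) (σ x) ≤ h := by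
        rw [hm]; exact h2
      exact d.meet_le_iff.mp h3
    have hinj : Function.Injective f := by
      intro z1 z2 hz
      obtain ⟨x1, hx1⟩ := c.img_surj h z1
      obtain ⟨x2, hx2⟩ := c.img_surj h z2
      rw [← hx1, ← hx2] at hz ⊢
      rw [hfx, hfx] at hz
      have : d.meet (σ x1) (σ x2) ≤ h := d.meet_le_iff.mpr hz
      rw [hm] at this
      exact c.meet_le_iff.mp this
    have hsurj : Function.Surjective f := by
      intro z'
      obtain ⟨y, hy⟩ := d.img_surj h z'
      exact ⟨c.img h (σ.symm y), by rw [hfx, σ.apply_symm_apply, hy]⟩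
    exact ⟨Equiv.ofBijective f ⟨hinj, hsurj⟩, hfx⟩
  choose e he using key
  refine ⟨e, ?_, fun x => he 0 x⟩
  intro h z
  obtain ⟨x, hx⟩ := c.img_surj h z
  subst hx
  have h1 : c.map h (c.img h x) = c.img (h+1) x := rfl
  rw [h1, he (h+1) x, he h x]
  rfl

/-- A chain isomorphism preserves meets. -/
theorem FChain.Iso.meet_eq {c : FChain k n} {d : FChain k m}
    (e : ∀ i, Fin (c.size i) ≃ Fin (d.size i))
    (hc : ∀ i x, e (i+1) (c.map i x) = d.map i (e i x))
    (i j : Fin (c.size 0)) : d.meet (e 0 i) (e 0 j) = c.meet i j := by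
  have himg : ∀ h x, e h (c.img h x) = d.img h (e 0 x) := by
    intro h
    induction h with
    | zero => intro x; rfl
    | succ h ih =>
      intro x
      show e (h+1) (c.map h (c.img h x)) = d.map h (d.img h (e 0 x))
      rw [hc h, ih]
  apply le_antisymm
  · rw [d.meet_le_iff, ← himg, ← himg]
    exact congrArg _ (c.meet_le_iff.mp le_rfl)
  · rw [c.meet_le_iff]
    apply (e (d.meet (e 0 i) (e 0 j))).injective
    rw [himg, himg]
    exact d.meet_le_iff.mp le_rfl

end ChainLemmas
section MGLemmas

theorem MG.Iso.refl (G : MG) : G.Iso G := ⟨Equiv.refl _, fun _ _ => rfl⟩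

theorem MG.Iso.symm {G H : MG} (h : G.Iso H) : H.Iso G := by
  obtain ⟨σ, hσ⟩ := h
  exact ⟨σ.symm, fun i j => by
    have := hσ (σ.symm i) (σ.symm j); rw [σ.apply_symm_apply, σ.apply_symm_apply] at this
    exact this.symm⟩

theorem MG.Iso.trans {G H K : MG} (h1 : G.Iso H) (h2 : H.Iso K) : G.Iso K := by
  obtain ⟨σ, hσ⟩ := h1; obtain ⟨τ, hτ⟩ := h2
  exact ⟨σ.trans τ, fun i j => (hτ _ _).trans (hσ _ _)⟩

theorem MG.maxMultExact_unique {G : MG} {k k' : ℕ} (h : G.MaxMultExact k)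
    (h' : G.MaxMultExact k') : k = k' := by
  obtain ⟨⟨i, j, hij⟩, hb⟩ := h
  obtain ⟨⟨i', j', hij'⟩, hb'⟩ := h'
  have := hb i' j'
  have := hb' i j
  omega

theorem MG.Iso.maxMultExact {G H : MG} (h : G.Iso H) {k : ℕ} (hm : H.MaxMultExact k) :
    G.MaxMultExact k := by
  obtain ⟨σ, hσ⟩ := h
  obtain ⟨⟨i, j, hij⟩, hb⟩ := hm
  refine ⟨⟨σ.symm i, σ.symm j, ?_⟩, fun i j => ?_⟩
  · rw [← hσ, σ.apply_symm_apply, σ.apply_symm_apply]; exact hij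
  · rw [← hσ]; exact hb _ _

/-- Every vertex of a fission graph with maximal multiplicity exactly `k ≥ 2` is
incident to an edge of multiplicity `≥ 2`. -/
theorem fission_heavy {G : MG} (hf : IsFissionGraph G) {k : ℕ} (hm : G.MaxMultExact k)
    (hk : 2 ≤ k) (v : G.V) : ∃ w, 2 ≤ G.e v w := by
  obtain ⟨K, m, c, hK, hex, ⟨σ, hσ⟩⟩ := hf
  -- c.graph has max mult exactly K - 1, and G too, so K - 1 = k
  have hmax : c.graph.MaxMultExact (K - 1) := c.graph_maxMult hK hex
  have hG : G.MaxMultExact (K - 1) := MG.Iso.maxMultExact ⟨σ, hσ⟩ hmax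
  have hkK : k = K - 1 := MG.maxMultExact_unique hm hG
  -- find a pair with meet = K
  obtain ⟨⟨a, b, hab⟩, _⟩ := hmax
  have hne : a ≠ b := by
    intro h; rw [c.graph_e a b, if_pos (show @Eq (Fin (c.size 0)) a b from h)] at hab; omega
  have hmab : c.meet a b = K := by
    have h1 := c.meet_eq_graph hne
    have h2 := c.meet_le_top a b
    rw [hab] at h1; omega
  -- v's image
  set x := σ v with hx
  by_cases hva : x = a
  · refine ⟨σ.symm b, ?_⟩
    rw [← hσ, σ.apply_symm_apply, ← hx, hva, hab]; omega
  · by_cases hvb : x = b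
    · refine ⟨σ.symm a, ?_⟩
      rw [← hσ, σ.apply_symm_apply, ← hx, hvb]
      rw [c.graph.symm b a, hab]; omega
    · have hu := c.meet_ultra a x b
      rw [hmab] at hu
      rcases le_max_iff.mp hu with h3 | h3
      · refine ⟨σ.symm a, ?_⟩
        rw [← hσ, σ.apply_symm_apply, ← hx]
        rw [c.graph_e x a, if_neg (show ¬ @Eq (Fin (c.size 0)) x a from hva)]
        rw [c.meet_comm a x] at h3
        have := c.meet_le_top x a
        omega
      · refine ⟨σ.symm b, ?_⟩
        rw [← hσ, σ.apply_symm_apply, ← hx]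
        rw [c.graph_e x b, if_neg (show ¬ @Eq (Fin (c.size 0)) x b from hvb)]
        have := c.meet_le_top x b
        omega

theorem snovaE_inr_le_one (G : MG) (l : G.V → ℕ) (z : Σ i : G.V, Fin (l i))
    (y : G.V ⊕ Σ i : G.V, Fin (l i)) : snovaE G l (.inr z) y ≤ 1 := by
  obtain ⟨i, s⟩ := z
  unfold snovaE
  rcases y with j | ⟨j, t⟩ <;> (dsimp only; split <;> omega)

theorem snovaE_inl_inl (G : MG) (l : G.V → ℕ) (i j : G.V) :
    snovaE G l (.inl i) (.inl j) = G.e i j := rfl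

end MGLemmas
section SnovaIso

variable {G H : MG} {l : G.V → ℕ} {m : H.V → ℕ}

/-- Cores map to cores. -/
theorem snova_core_to_core (σ : (G.snova l).V ≃ (H.snova m).V)
    (hσ : ∀ x y, (H.snova m).e (σ x) (σ y) = (G.snova l).e x y)
    (hheavy : ∀ v : G.V, ∃ w, 2 ≤ G.e v w) (i : G.V) :
    ∃ j : H.V, σ (Sum.inl i) = Sum.inl j := by
  obtain ⟨w, hw⟩ := hheavy i
  have h1 : snovaE H m (σ (Sum.inl i)) (σ (Sum.inl w)) = G.e i w := hσ _ _
  cases hsi : σ (Sum.inl i) with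
  | inl j => exact ⟨j, rfl⟩
  | inr z =>
    have h2 := snovaE_inr_le_one H m z (σ (Sum.inl w))
    rw [hsi] at h1
    omega

/-- Legs map to the corresponding legs, preserving position. -/
theorem snova_leg_to_leg (σ : (G.snova l).V ≃ (H.snova m).V)
    (hσ : ∀ x y, (H.snova m).e (σ x) (σ y) = (G.snova l).e x y)
    (τ : G.V → H.V) (hτ : ∀ i, σ (Sum.inl i) = Sum.inl (τ i))
    (hback : ∀ z : Σ i : G.V, Fin (l i), ∃ w, σ (Sum.inr z) = Sum.inr w) :
    ∀ t : ℕ, ∀ (i : G.V) (ht : t < l i),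
      ∃ ht' : t < m (τ i), σ (Sum.inr ⟨i, ⟨t, ht⟩⟩) = Sum.inr ⟨τ i, ⟨t, ht'⟩⟩ := by
  classical
  have hσ' : ∀ x y, snovaE H m (σ x) (σ y) = snovaE G l x y := hσ
  intro t
  induction t using Nat.strong_induction_on with
  | _ t IH =>
    intro i ht
    obtain ⟨⟨j, s⟩, hz⟩ := hback ⟨i, ⟨t, ht⟩⟩
    match t with
    | 0 =>
      have h1 : snovaE G l (Sum.inl i) (Sum.inr ⟨i, ⟨0, ht⟩⟩) = 1 := by
        show (if _ then _ else _) = 1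
        rw [if_pos ⟨rfl, rfl⟩]
      have h2 := hσ' (Sum.inl i) (Sum.inr ⟨i, ⟨0, ht⟩⟩)
      rw [h1, hτ, hz] at h2
      have h3 : τ i = j ∧ (0 : ℕ) = s.val := by
        by_contra hc
        have : snovaE H m (Sum.inl (τ i)) (Sum.inr ⟨j, s⟩) = 0 := by
          show (if _ then _ else _) = 0
          rw [if_neg]
          intro ⟨ha, hb⟩
          exact hc ⟨ha, hb.symm⟩
        omega
      obtain ⟨hji, hs⟩ := h3
      subst hji
      refine ⟨by omega, ?_⟩
      rw [hz]
      congr 1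
      congr 1
      exact Fin.ext hs.symm
    | (t'+1) =>
      obtain ⟨ht'', heq⟩ := IH t' (by omega) i (by omega)
      have h1 : snovaE G l (Sum.inr ⟨i, ⟨t', by omega⟩⟩) (Sum.inr ⟨i, ⟨t'+1, ht⟩⟩) = 1 := by
        show (if _ then _ else _) = 1
        rw [if_pos ⟨rfl, Or.inl rfl⟩]
      have h2 := hσ' (Sum.inr ⟨i, ⟨t', by omega⟩⟩) (Sum.inr ⟨i, ⟨t'+1, ht⟩⟩)
      rw [h1, heq, hz] at h2
      have h3 : τ i = j ∧ ((t' : ℕ) + 1 = s.val ∨ s.val + 1 = t') := by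
        by_contra hc
        have : snovaE H m (Sum.inr ⟨τ i, ⟨t', ht''⟩⟩) (Sum.inr ⟨j, s⟩) = 0 := by
          show (if _ then _ else _) = 0
          rw [if_neg hc]
        omega
      obtain ⟨hji, hs⟩ := h3
      subst hji
      rcases hs with hs | hs
      · refine ⟨by omega, ?_⟩
        rw [hz]
        congr 2
        exact Fin.ext hs.symm
      · -- s.val + 1 = t' : contradiction with injectivity
        exfalso
        have htpos : 1 ≤ t' := by omega
        obtain ⟨hta, heqa⟩ := IH (t'-1) (by omega) i (by omega)
        have : σ (Sum.inr ⟨i, ⟨t'-1, by omega⟩⟩) = σ (Sum.inr ⟨i, ⟨t'+1, ht⟩⟩) := by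
          rw [heqa, hz]
          congr 2
          exact Fin.ext (by simp; omega)
        have h4 := σ.injective this
        have h5 : (t' - 1 : ℕ) = t' + 1 := by
          have := congrArg (fun x => match x with
            | Sum.inr (⟨_, v⟩ : Σ i : G.V, Fin (l i)) => v.val
            | Sum.inl _ => 0) h4
          simpa using this
        omega

/-- Main structural lemma: an isomorphism of supernova graphs restricts to an
isomorphism of cores preserving the leg lengths. -/
theorem snova_iso_struct (σ : (G.snova l).V ≃ (H.snova m).V)
    (hσ : ∀ x y, (H.snova m).e (σ x) (σ y) = (G.snova l).e x y)
    (hheavyG : ∀ v : G.V, ∃ w, 2 ≤ G.e v w)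
    (hheavyH : ∀ v : H.V, ∃ w, 2 ≤ H.e v w) :
    ∃ τ : G.V ≃ H.V, (∀ i j, H.e (τ i) (τ j) = G.e i j) ∧ ∀ i, m (τ i) = l i := by
  classical
  have hσs : ∀ x y, (G.snova l).e (σ.symm x) (σ.symm y) = (H.snova m).e x y := by
    intro x y
    rw [← hσ (σ.symm x) (σ.symm y), σ.apply_symm_apply, σ.apply_symm_apply]
  choose τ hτ using snova_core_to_core σ hσ hheavyG
  choose ρ hρ using snova_core_to_core σ.symm hσs hheavyH
  have hback : ∀ z : Σ i : G.V, Fin (l i), ∃ w, σ (Sum.inr z) = Sum.inr w := by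
    intro z
    cases hc : σ (Sum.inr z) with
    | inr w => exact ⟨w, rfl⟩
    | inl j =>
      exfalso
      have : σ.symm (Sum.inl j) = Sum.inr z := by rw [← hc]; exact σ.symm_apply_apply _
      rw [hρ j] at this
      exact Sum.inl_ne_inr this
  have hbacks : ∀ z : Σ i : H.V, Fin (m i), ∃ w, σ.symm (Sum.inr z) = Sum.inr w := by
    intro z
    cases hc : σ.symm (Sum.inr z) with
    | inr w => exact ⟨w, rfl⟩
    | inl j =>
      exfalso
      have : σ (Sum.inl j) = Sum.inr z := by rw [← hc]; exact σ.apply_symm_apply _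
      rw [hτ j] at this
      exact Sum.inl_ne_inr this
  have hlr : ∀ i, ρ (τ i) = i := by
    intro i
    have : σ.symm (Sum.inl (τ i)) = Sum.inl i := by rw [← hτ]; exact σ.symm_apply_apply _
    rw [hρ] at this
    exact Sum.inl_injective this
  have hrl : ∀ j, τ (ρ j) = j := by
    intro j
    have : σ (Sum.inl (ρ j)) = Sum.inl j := by rw [← hρ]; exact σ.apply_symm_apply _
    rw [hτ] at this
    exact Sum.inl_injective this
  have hle1 : ∀ i, l i ≤ m (τ i) := by
    intro i
    by_contra hc
    push_neg at hc
    obtain ⟨ht', _⟩ := snova_leg_to_leg σ hσ τ hτ hback (m (τ i)) i hc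
    omega
  have hle2 : ∀ j, m j ≤ l (ρ j) := by
    intro j
    by_contra hc
    push_neg at hc
    obtain ⟨ht', _⟩ := snova_leg_to_leg σ.symm hσs ρ hρ hbacks (l (ρ j)) j hc
    omega
  refine ⟨⟨τ, ρ, hlr, hrl⟩, fun i j => ?_, fun i => ?_⟩
  · show H.e (τ i) (τ j) = G.e i j
    have := hσ (Sum.inl i) (Sum.inl j)
    rw [hτ, hτ] at this
    exact this
  · show m (τ i) = l i
    have h1 := hle1 i
    have h2 := hle2 (τ i)
    rw [hlr] at h2
    omega

end SnovaIso
section EFGSN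

variable {k n : ℕ}

theorem snovaE_inr_le_one' (G : MG) (l : G.V → ℕ) (z : Σ i : G.V, Fin (l i))
    (y : G.V ⊕ Σ i : G.V, Fin (l i)) : snovaE G l y (.inr z) ≤ 1 := by
  obtain ⟨i, s⟩ := z
  unfold snovaE
  rcases y with j | ⟨j, t⟩ <;> (dsimp only; split <;> omega)

theorem EFG.heavy (a : EFG k n) (hk : 2 ≤ k) : ∀ v, ∃ w, 2 ≤ a.G.e v w :=
  fun v => fission_heavy a.fission a.maxm hk v

/-- Backward: an isomorphism of supernova graphs gives an isomorphism of EFGs. -/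
theorem EFG.iso_of_snova_iso {a b : EFG k n} (hk : 2 ≤ k)
    (h : a.snovaOf.Iso b.snovaOf) : a.Iso b := by
  obtain ⟨σ, hσ⟩ := h
  obtain ⟨τ, he, hd⟩ := snova_iso_struct (G := a.G) (H := b.G)
    (l := fun i => a.d i - 1) (m := fun i => b.d i - 1) σ hσ (a.heavy hk) (b.heavy hk)
  refine ⟨τ, he, fun i => ?_⟩
  have h1 := hd i
  have h2 := a.d_pos i
  have h3 := b.d_pos (τ i)
  omega

/-- Forward: an isomorphism of EFGs gives an isomorphism of supernova graphs. -/
theorem EFG.snova_iso_of_iso {a b : EFG k n} (h : a.Iso b) :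
    a.snovaOf.Iso b.snovaOf := by
  classical
  obtain ⟨τ, he, hd⟩ := h
  have hl : ∀ i, a.d i - 1 = b.d (τ i) - 1 := fun i => by rw [hd i]
  refine ⟨Equiv.sumCongr τ (Equiv.sigmaCongr τ (fun i => finCongr (hl i))), ?_⟩
  rintro (i | ⟨i, s⟩) (j | ⟨j, t⟩)
  · exact he i j
  · show (if τ i = τ j ∧ ((finCongr (hl j)) t).val = 0 then 1 else 0)
        = (if i = j ∧ t.val = 0 then 1 else 0)
    refine if_congr ?_ rfl rfl
    simp
  · show (if τ j = τ i ∧ ((finCongr (hl i)) s).val = 0 then 1 else 0)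
        = (if j = i ∧ s.val = 0 then 1 else 0)
    refine if_congr ?_ rfl rfl
    simp
  · show (if τ i = τ j ∧ (((finCongr (hl i)) s).val + 1 = ((finCongr (hl j)) t).val
          ∨ ((finCongr (hl j)) t).val + 1 = ((finCongr (hl i)) s).val) then 1 else 0)
        = (if i = j ∧ (s.val + 1 = t.val ∨ t.val + 1 = s.val) then 1 else 0)
    refine if_congr ?_ rfl rfl
    simp

/-- The three properties of the supernova graph of an EFG. -/
theorem EFG.snova_props (a : EFG k n) (hk : 2 ≤ k) :
    IsSupernova a.snovaOf ∧ a.snovaOf.MaxMultExact k ∧ Fintype.card a.snovaOf.V = n := by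
  refine ⟨⟨a.G, fun i => a.d i - 1, a.fission, MG.Iso.refl _⟩, ?_, ?_⟩
  · obtain ⟨⟨i, j, hij⟩, hb⟩ := a.maxm
    refine ⟨⟨Sum.inl i, Sum.inl j, hij⟩, ?_⟩
    rintro (i | z) (j | w)
    · exact hb i j
    · show snovaE a.G (fun i => a.d i - 1) (Sum.inl i) (Sum.inr w) ≤ k
      exact le_trans (snovaE_inr_le_one' a.G _ w _) (show (1:ℕ) ≤ k by omega)
    · show snovaE a.G (fun i => a.d i - 1) (Sum.inr z) (Sum.inl j) ≤ k
      exact le_trans (snovaE_inr_le_one a.G _ z _) (show (1:ℕ) ≤ k by omega)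
    · show snovaE a.G (fun i => a.d i - 1) (Sum.inr z) (Sum.inr w) ≤ k
      exact le_trans (snovaE_inr_le_one a.G _ z _) (show (1:ℕ) ≤ k by omega)
  · show Fintype.card (a.G.V ⊕ Σ i : a.G.V, Fin (a.d i - 1)) = n
    rw [Fintype.card_sum, Fintype.card_sigma]
    simp only [Fintype.card_fin]
    have hc : Fintype.card a.G.V = ∑ _i : a.G.V, 1 := by simp
    have h2 : ∀ x : a.G.V, 1 + (a.d x - 1) = a.d x := fun x => by have := a.d_pos x; omega
    rw [hc, ← Finset.sum_add_distrib]
    simp only [h2]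
    exact a.rank

theorem snova_congr {G : MG} {l l' : G.V → ℕ} (h : ∀ i, l i = l' i) :
    (G.snova l).Iso (G.snova l') := by
  have : l = l' := funext h
  subst this
  exact MG.Iso.refl _

/-- Every supernova graph class comes from an EFG. -/
theorem exists_efg_of_sn (hk : 2 ≤ k) (s : SN k n) : ∃ a : EFG k n, a.snovaOf.Iso s.1 := by
  obtain ⟨hsup, hmax, hcard⟩ := s.2
  obtain ⟨Hh, l, hfiss, ⟨σ, hσ⟩⟩ := hsup
  have hbound : ∀ i j, Hh.e i j ≤ k := by
    intro i j
    have h1 := hσ (σ.symm (Sum.inl i)) (σ.symm (Sum.inl j))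
    rw [σ.apply_symm_apply (Sum.inl i), σ.apply_symm_apply (Sum.inl j)] at h1
    have h2 : Hh.e i j = s.1.e (σ.symm (Sum.inl i)) (σ.symm (Sum.inl j)) := h1
    rw [h2]
    exact hmax.2 _ _
  have hex : ∃ i j, Hh.e i j = k := by
    obtain ⟨x, y, hxy⟩ := hmax.1
    have h1 : (Hh.snova l).e (σ x) (σ y) = k := by rw [hσ, hxy]
    cases hsx : σ x with
    | inr z =>
      rw [hsx] at h1
      have := snovaE_inr_le_one Hh l z (σ y)
      have h2 : (Hh.snova l).e (Sum.inr z) (σ y) = snovaE Hh l (Sum.inr z) (σ y) := rfl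
      omega
    | inl i =>
      cases hsy : σ y with
      | inr z =>
        rw [hsx, hsy] at h1
        have h2 : (Hh.snova l).e (Sum.inl i) (Sum.inr z) = snovaE Hh l (Sum.inr z) (Sum.inl i) :=
          (Hh.snova l).symm _ _
        have := snovaE_inr_le_one Hh l z (Sum.inl i)
        omega
      | inl j =>
        rw [hsx, hsy] at h1
        exact ⟨i, j, h1⟩
  have hrank : ∑ i, (l i + 1) = n := by
    have h1 : Fintype.card (Hh.snova l).V = n := by
      rw [← hcard]
      exact (Fintype.card_congr σ).symm
    have h2 : Fintype.card (Hh.snova l).V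
        = Fintype.card Hh.V + ∑ i, l i := by
      show Fintype.card (Hh.V ⊕ Σ i : Hh.V, Fin (l i)) = _
      rw [Fintype.card_sum, Fintype.card_sigma]
      simp only [Fintype.card_fin]
    rw [Finset.sum_add_distrib]
    simp only [Finset.sum_const, Finset.card_univ, smul_eq_mul, mul_one]
    omega
  refine ⟨EFG.mk Hh hfiss ⟨hex, hbound⟩ (fun i => l i + 1)
    (fun i => Nat.le_add_left 1 (l i)) hrank, ?_⟩
  exact MG.Iso.trans (snova_congr (fun i => show l i + 1 - 1 = l i by omega))
    (MG.Iso.symm ⟨σ, hσ⟩)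

theorem EFG.isoEquiv : Equivalence (fun a b : EFG k n => a.Iso b) := by
  constructor
  · exact fun a => ⟨Equiv.refl _, fun _ _ => rfl, fun _ => rfl⟩
  · rintro a b ⟨τ, he, hd⟩
    refine ⟨τ.symm, fun i j => ?_, fun i => ?_⟩
    · rw [← he (τ.symm i) (τ.symm j), τ.apply_symm_apply, τ.apply_symm_apply]
    · rw [← hd (τ.symm i), τ.apply_symm_apply]
  · rintro a b c ⟨τ, he, hd⟩ ⟨ρ, he', hd'⟩
    exact ⟨τ.trans ρ, fun i j => (he' _ _).trans (he _ _), fun i => (hd' _).trans (hd _)⟩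

theorem SN.isoEquiv : Equivalence (fun a b : SN k n => a.1.Iso b.1) :=
  ⟨fun a => MG.Iso.refl _, MG.Iso.symm, MG.Iso.trans⟩

end EFGSN
section TreeEFG

variable {k n : ℕ}

theorem FChain.isoEquiv {k n : ℕ} : Equivalence (fun c d : FChain k n => c.Iso d) := by
  constructor
  · exact fun c => ⟨fun i => Equiv.refl _, fun _ _ => rfl⟩
  · rintro c d ⟨e, hc⟩
    refine ⟨fun i => (e i).symm, fun i x => ?_⟩
    apply (e (i+1)).injective
    rw [Equiv.apply_symm_apply, hc, Equiv.apply_symm_apply]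
  · rintro c d f ⟨e, hc⟩ ⟨e', hc'⟩
    exact ⟨fun i => (e i).trans (e' i), fun i x => by
      simp only [Equiv.trans_apply, hc, hc']⟩

theorem FTree.isoEquiv {k n : ℕ} : Equivalence (fun T U : FTree k n => T.Iso U) := by
  constructor
  · exact fun T => ⟨fun i => Equiv.refl _, fun _ _ => rfl, fun _ => rfl⟩
  · rintro T U ⟨e, hc, hm⟩
    refine ⟨fun i => (e i).symm, fun i x => ?_, fun x => ?_⟩
    · apply (e (i+1)).injective
      rw [Equiv.apply_symm_apply, hc, Equiv.apply_symm_apply]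
    · rw [← hm ((e 0).symm x), Equiv.apply_symm_apply]
  · rintro T U W ⟨e, hc, hm⟩ ⟨e', hc', hm'⟩
    refine ⟨fun i => (e i).trans (e' i), fun i x => by
      simp only [Equiv.trans_apply, hc, hc'], fun x => by
      simp only [Equiv.trans_apply, hm, hm']⟩

/-- The EFG associated to an untwisted fission tree. -/
def FTree.toEFG (hk : 1 ≤ k) (T : FTree (k+1) n) : EFG k n where
  G := T.chain.graph
  fission := ⟨k+1, T.leaves, T.chain, by omega, T.exact, MG.Iso.refl _⟩
  maxm := by
    have h := T.chain.graph_maxMult (by omega) T.exact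
    simpa using h
  d := T.mult
  d_pos := T.mult_pos
  rank := T.mult_sum

theorem FTree.toEFG_iso {T U : FTree (k+1) n} (hk : 1 ≤ k) (h : T.Iso U) :
    (T.toEFG hk).Iso (U.toEFG hk) := by
  obtain ⟨e, hc, hm⟩ := h
  have hmeet := FChain.Iso.meet_eq e hc
  refine ⟨e 0, fun i j => ?_, hm⟩
  show U.chain.graph.e (e 0 i) (e 0 j) = T.chain.graph.e i j
  rw [U.chain.graph_e (e 0 i) (e 0 j), T.chain.graph_e i j]
  by_cases hij : i = j
  · rw [if_pos (show @Eq (Fin (T.chain.size 0)) i j from hij), if_pos (by rw [hij])]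
  · rw [if_neg (show ¬ @Eq (Fin (T.chain.size 0)) i j from hij), if_neg (fun hc2 => hij ((e 0).injective hc2)), hmeet i j]

theorem FTree.iso_of_toEFG_iso {T U : FTree (k+1) n} {hk : 1 ≤ k}
    (h : (T.toEFG hk).Iso (U.toEFG hk)) : T.Iso U := by
  obtain ⟨σ, he, hd⟩ := h
  have hmeet : ∀ i j, U.chain.meet (σ i) (σ j) = T.chain.meet i j := by
    intro i j
    by_cases hij : i = j
    · subst hij
      rw [(U.chain.meet_eq_zero_iff (i := σ i) (j := σ i)).mpr rfl, (T.chain.meet_eq_zero_iff (i := i) (j := i)).mpr rfl]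
    · have hσij : σ i ≠ σ j := fun hc2 => hij (σ.injective hc2)
      rw [U.chain.meet_eq_graph hσij, T.chain.meet_eq_graph hij]
      have := he i j
      have h2 : U.chain.graph.e (σ i) (σ j) = T.chain.graph.e i j := this
      rw [h2]
  obtain ⟨e, hcomm, he0⟩ := FChain.iso_of_meet_equiv T.chain U.chain σ hmeet
  refine ⟨e, hcomm, fun x => ?_⟩
  rw [he0 x]
  exact hd x

theorem exists_tree_of_efg (hk : 1 ≤ k) (a : EFG k n) :
    ∃ T : FTree (k+1) n, (T.toEFG hk).Iso a := by
  obtain ⟨K, m, c, hK2, hex, ⟨σ, hσ⟩⟩ := a.fission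
  have hmax := c.graph_maxMult hK2 hex
  have hGmax : a.G.MaxMultExact (K-1) := MG.Iso.maxMultExact ⟨σ, hσ⟩ hmax
  have hkK : k = K - 1 := MG.maxMultExact_unique a.maxm hGmax
  have hK : K = k + 1 := by omega
  subst hK
  refine ⟨⟨m, c, hex, fun x => a.d (σ.symm x), fun x => a.d_pos _, ?_⟩, ?_⟩
  · exact (Equiv.sum_comp σ.symm a.d).trans a.rank
  · refine ⟨σ.symm, fun i j => ?_, fun i => rfl⟩
    show a.G.e (σ.symm i) (σ.symm j) = c.graph.e i j
    rw [← hσ (σ.symm i) (σ.symm j), σ.apply_symm_apply i, σ.apply_symm_apply j]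

end TreeEFG
section ChainTree

variable {k n : ℕ}

/-- Fiber of the first projection of a sigma type. -/
def sigmaFstFiber {ι : Type*} (β : ι → Type*) (j : ι) :
    {y : Σ i, β i // y.1 = j} ≃ β j where
  toFun y := y.2 ▸ y.1.2
  invFun b := ⟨⟨j, b⟩, rfl⟩
  left_inv := by rintro ⟨⟨i, b⟩, rfl⟩; rfl
  right_inv := by intro b; rfl

/-- The untwisted fission tree obtained from a fission chain of slope exactly
`k+2` by deleting the leaves and recording fiber sizes. -/
def FChain.toTree (c : FChain (k+2) n) (hex : c.ExactSlope) : FTree (k+1) n where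
  leaves := c.size 1
  chain :=
    { size := fun h => c.size (h+1)
      map := fun h => c.map (h+1)
      surj := fun h => c.surj (h+1)
      size_zero := rfl
      size_top := c.size_top }
  exact := Or.inr (hex.resolve_left (by omega))
  mult := fun j => Fintype.card {x : Fin (c.size 0) // c.map 0 x = j}
  mult_pos := fun j => by
    obtain ⟨x, hx⟩ := c.surj 0 j
    exact Fintype.card_pos_iff.mpr ⟨⟨x, hx⟩⟩
  mult_sum := by
    rw [← Fintype.card_sigma, Fintype.card_congr (Equiv.sigmaFiberEquiv (c.map 0)),
      Fintype.card_fin]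
    exact c.size_zero

theorem FChain.toTree_iso {c d : FChain (k+2) n} (hc : c.ExactSlope) (hd : d.ExactSlope)
    (h : c.Iso d) : (c.toTree hc).Iso (d.toTree hd) := by
  obtain ⟨e, hcomm⟩ := h
  refine ⟨fun i => e (i+1), fun i x => hcomm (i+1) x, fun j => ?_⟩
  show Fintype.card {y : Fin (d.size 0) // d.map 0 y = @id (Fin (d.size (0+1))) (e 1 j)}
      = Fintype.card {x : Fin (c.size 0) // c.map 0 x = @id (Fin (c.size (0+1))) j}
  refine Fintype.card_congr (Equiv.subtypeEquiv (e 0) fun x => ?_).symm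
  rw [← hcomm 0 x]
  exact (Equiv.apply_eq_iff_eq (e 1)).symm

theorem FChain.iso_of_toTree_iso {c d : FChain (k+2) n} {hc : c.ExactSlope}
    {hd : d.ExactSlope} (h : (c.toTree hc).Iso (d.toTree hd)) : c.Iso d := by
  obtain ⟨f, hcomm, hm⟩ := h
  have F : ∀ j : Fin (c.size (0+1)),
      {x : Fin (c.size 0) // c.map 0 x = j} ≃ {y : Fin (d.size 0) // d.map 0 y = @id (Fin (d.size (0+1))) (f 0 j)} :=
    fun j => Fintype.equivOfCardEq (hm j).symm
  set e0 : Fin (c.size 0) ≃ Fin (d.size 0) :=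
    (Equiv.sigmaFiberEquiv (c.map 0)).symm.trans
      ((Equiv.sigmaCongr (β₁ := fun j : Fin (c.size (0+1)) => {x : Fin (c.size 0) // c.map 0 x = j})
        (β₂ := fun j : Fin (d.size (0+1)) => {y : Fin (d.size 0) // d.map 0 y = j}) (f 0) F).trans (Equiv.sigmaFiberEquiv (d.map 0))) with he0def
  have he0 : ∀ x, d.map 0 (e0 x) = f 0 (c.map 0 x) := by
    intro x
    have h1 : e0 x = (F (c.map 0 x) ⟨x, rfl⟩).1 := rfl
    rw [h1]
    exact (F (c.map 0 x) ⟨x, rfl⟩).2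
  refine ⟨fun i => match i with | 0 => e0 | (i+1) => f i, fun i x => ?_⟩
  match i with
  | 0 => exact (he0 x).symm
  | (i+1) => exact hcomm i x

/-- The equivalence between `Fin n` and the disjoint union of the multiplicity
fibers. -/
noncomputable def FTree.leafEquiv (T : FTree (k+1) n) :
    Fin n ≃ Σ i : Fin (T.chain.size 0), Fin (T.mult i) :=
  Fintype.equivOfCardEq (by
    rw [Fintype.card_fin, Fintype.card_sigma]
    simp only [Fintype.card_fin]
    exact T.mult_sum.symm)

/-- The fission chain of slope exactly `k+2` obtained from an untwisted fission
tree by adding a new leaf level. -/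
noncomputable def FTree.toChain (T : FTree (k+1) n) : FChain (k+2) n where
  size := fun h => match h with | 0 => n | h+1 => T.chain.size h
  map := fun h => match h with
    | 0 => fun x => (T.leafEquiv x).1
    | h+1 => T.chain.map h
  surj := fun h => match h with
    | 0 => fun j => ⟨T.leafEquiv.symm ⟨j, ⟨0, T.mult_pos j⟩⟩, by
        show (T.leafEquiv (T.leafEquiv.symm _)).1 = j
        rw [Equiv.apply_symm_apply]⟩
    | h+1 => T.chain.surj h
  size_zero := rfl
  size_top := T.chain.size_top

theorem FTree.toChain_exact (T : FTree (k+1) n) : T.toChain.ExactSlope :=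
  Or.inr (T.exact.resolve_left (by omega))

theorem FTree.toChain_toTree_iso (T : FTree (k+1) n) :
    (T.toChain.toTree T.toChain_exact).Iso T := by
  refine ⟨fun i => Equiv.refl _, fun i x => rfl, fun j => ?_⟩
  show T.mult j = Fintype.card {x : Fin n // (T.leafEquiv x).1 = @id (Fin (T.chain.size 0)) j}
  refine Eq.symm ?_
  rw [Fintype.card_congr ((Equiv.subtypeEquiv T.leafEquiv (fun x => Iff.rfl)).trans
    (sigmaFstFiber (fun i => Fin (T.mult i)) (@id (Fin (T.chain.size 0)) j)))]
  exact Fintype.card_fin _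

end ChainTree
/-- For k ≥ 2 and n ≥ 1, the assignment `(Γ, d) ↦ Γ̂(l)`, `l i = d i − 1`, sends
equipped fission graphs of rank `n` with maximal edge multiplicity exactly `k`
to supernova graphs with `n` vertices and maximal edge multiplicity exactly `k`,
and induces a bijection on isomorphism classes; consequently
`σ(k,n) = ψ(k+1,n) = φ(k+2,n)`. -/
theorem efg_snova_bijection (k n : ℕ) (hk : 2 ≤ k) (hn : 1 ≤ n) :
    (∃ H : ∀ a : EFG k n,
        IsSupernova a.snovaOf ∧ a.snovaOf.MaxMultExact k ∧ Fintype.card a.snovaOf.V = n,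
      ∃ F : Quot (fun a b : EFG k n => a.Iso b) → Quot (fun a b : SN k n => a.1.Iso b.1),
        Function.Bijective F ∧
        ∀ a : EFG k n, F (Quot.mk _ a) = Quot.mk _ ⟨a.snovaOf, H a⟩) ∧
    sigmaSN k n = psi (k+1) n ∧ sigmaSN k n = phi (k+2) n := by
  have hk1 : 1 ≤ k := by omega
  have eqE : Equivalence (fun a b : EFG k n => a.Iso b) := EFG.isoEquiv
  have eqS : Equivalence (fun a b : SN k n => a.1.Iso b.1) := SN.isoEquiv
  have eqT : Equivalence (fun T U : FTree (k+1) n => T.Iso U) := FTree.isoEquiv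
  have eqC : Equivalence
      (fun c d : {c : FChain (k+2) n // c.ExactSlope} => c.1.Iso d.1) :=
    ⟨fun c => FChain.isoEquiv.refl c.1, fun h => FChain.isoEquiv.symm h,
      fun h h' => FChain.isoEquiv.trans h h'⟩
  have H : ∀ a : EFG k n,
      IsSupernova a.snovaOf ∧ a.snovaOf.MaxMultExact k ∧ Fintype.card a.snovaOf.V = n :=
    fun a => a.snova_props hk
  -- the bijection EFG classes → SN classes
  set F : Quot (fun a b : EFG k n => a.Iso b) → Quot (fun a b : SN k n => a.1.Iso b.1) :=
    Quot.lift (fun a => Quot.mk _ (⟨a.snovaOf, H a⟩ : SN k n))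
      (fun a b hab => Quot.sound (EFG.snova_iso_of_iso hab)) with hF
  have hFbij : Function.Bijective F := by
    constructor
    · intro qa qb
      induction qa using Quot.ind with | _ a => ?_
      induction qb using Quot.ind with | _ b => ?_
      intro hq
      have hq' : Quot.mk (fun a b : SN k n => a.1.Iso b.1) ⟨a.snovaOf, H a⟩
          = Quot.mk _ ⟨b.snovaOf, H b⟩ := hq
      have h1 : a.snovaOf.Iso b.snovaOf := (eqS.eqvGen_iff).mp (Quot.eq.mp hq')
      exact Quot.sound (EFG.iso_of_snova_iso hk h1)
    · intro qs
      induction qs using Quot.ind with | _ s => ?_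
      obtain ⟨a, ha⟩ := exists_efg_of_sn hk s
      exact ⟨Quot.mk _ a, Quot.sound ha⟩
  -- the bijection FTree classes → EFG classes
  set F2 : Quot (fun T U : FTree (k+1) n => T.Iso U)
      → Quot (fun a b : EFG k n => a.Iso b) :=
    Quot.lift (fun T => Quot.mk _ (T.toEFG hk1))
      (fun T U h => Quot.sound (FTree.toEFG_iso hk1 h)) with hF2
  have hF2bij : Function.Bijective F2 := by
    constructor
    · intro qa qb
      induction qa using Quot.ind with | _ T => ?_
      induction qb using Quot.ind with | _ U => ?_
      intro hq
      have hq' : Quot.mk (fun a b : EFG k n => a.Iso b) (T.toEFG hk1)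
          = Quot.mk _ (U.toEFG hk1) := hq
      have h1 : (T.toEFG hk1).Iso (U.toEFG hk1) := (eqE.eqvGen_iff).mp (Quot.eq.mp hq')
      exact Quot.sound (FTree.iso_of_toEFG_iso h1)
    · intro qa
      induction qa using Quot.ind with | _ a => ?_
      obtain ⟨T, hT⟩ := exists_tree_of_efg hk1 a
      exact ⟨Quot.mk _ T, Quot.sound hT⟩
  -- the bijection FChain classes → FTree classes
  set F3 : Quot (fun c d : {c : FChain (k+2) n // c.ExactSlope} => c.1.Iso d.1)
      → Quot (fun T U : FTree (k+1) n => T.Iso U) :=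
    Quot.lift (fun c => Quot.mk _ (c.1.toTree c.2))
      (fun c d h => Quot.sound (FChain.toTree_iso c.2 d.2 h)) with hF3
  have hF3bij : Function.Bijective F3 := by
    constructor
    · intro qa qb
      induction qa using Quot.ind with | _ c => ?_
      induction qb using Quot.ind with | _ d => ?_
      intro hq
      have hq' : Quot.mk (fun T U : FTree (k+1) n => T.Iso U) (c.1.toTree c.2)
          = Quot.mk _ (d.1.toTree d.2) := hq
      have h1 : (c.1.toTree c.2).Iso (d.1.toTree d.2) := (eqT.eqvGen_iff).mp (Quot.eq.mp hq')
      exact Quot.sound (FChain.iso_of_toTree_iso h1)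
    · intro qT
      induction qT using Quot.ind with | _ T => ?_
      refine ⟨Quot.mk _ ⟨T.toChain, T.toChain_exact⟩, ?_⟩
      exact Quot.sound (T.toChain_toTree_iso)
  have h1 := Nat.card_eq_of_bijective F hFbij
  have h2 := Nat.card_eq_of_bijective F2 hF2bij
  have h3 := Nat.card_eq_of_bijective F3 hF3bij
  refine ⟨⟨H, F, hFbij, fun a => rfl⟩, ?_, ?_⟩
  · show Nat.card _ = Nat.card _
    exact (h2.trans h1).symm
  · show Nat.card _ = Nat.card _
    exact ((h3.trans h2).trans h1).symm
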